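/- arXiv:2409.16545 — 3 statements merged into one kernel-verified Lean document; each statement's English description precedes it below -/
import Mathlib

section
/- If U : (Fin N → ℝ³) → ℝ is invariant under the simultaneous action of SO(3) on each argument (U(Rq₁,...,Rq_N) = U(q₁,...,q_N) for all R ∈ SO(3)), and U is differentiable, then the sum over i of q_i × (∂U/∂q_i) equals zero. -/
/-!
Differentiating the invariance `U (exp (t • Ω) q) = U q` at `t = 0` along the rotation generated
by a skew-symmetric `Ω` gives `dU_q (Ω q) = 0`. Taking for `Ω` the matrix of `x ↦ a ⨯₃ x` turns this
into `∑ i, (a ⨯₃ qᵢ) ⬝ᵥ ∂U/∂qᵢ = a ⬝ᵥ ∑ i, qᵢ ⨯₃ ∂U/∂qᵢ = 0`, and choosing `a` to be that sum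
itself shows that it vanishes.
-/

open Matrix NormedSpace

namespace Matrix

variable {n : Type*} [Fintype n] [DecidableEq n]

theorem transpose_exp_mul_exp_of_transpose_eq_neg {Ω : Matrix n n ℝ} (hΩ : Ωᵀ = -Ω) :
    (exp Ω)ᵀ * exp Ω = 1 := by
  rw [← exp_transpose, hΩ, exp_neg]
  exact nonsing_inv_mul _ ((isUnit_iff_isUnit_det _).mp (isUnit_exp Ω))

theorem det_exp_nonneg (A : Matrix n n ℝ) : 0 ≤ (exp A).det := by
  have hsq : exp A = exp ((2⁻¹ : ℝ) • A) ^ 2 := by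
    rw [← exp_nsmul, ← Nat.cast_smul_eq_nsmul ℝ, smul_smul]
    norm_num
  rw [hsq, det_pow]
  positivity

theorem det_exp_of_transpose_eq_neg {Ω : Matrix n n ℝ} (hΩ : Ωᵀ = -Ω) : (exp Ω).det = 1 := by
  have h := congrArg det (transpose_exp_mul_exp_of_transpose_eq_neg hΩ)
  rw [det_mul, det_transpose, det_one, ← sq] at h
  nlinarith [det_exp_nonneg Ω]

open scoped Matrix.Norms.Operator in
theorem hasDerivAt_exp_smul_mulVec {ι : Type*} [Fintype ι] (Ω : Matrix n n ℝ) (q : ι → n → ℝ) :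
    HasDerivAt (fun t : ℝ => fun i => exp (t • Ω) *ᵥ q i) (fun i => Ω *ᵥ q i) 0 := by
  let L : Matrix n n ℝ →ₗ[ℝ] ι → n → ℝ :=
    { toFun := fun M i => M *ᵥ q i
      map_add' := fun M M' => by ext; simp [add_mulVec]
      map_smul' := fun c M => by ext; simp [smul_mulVec] }
  have h := (LinearMap.toContinuousLinearMap L).hasFDerivAt.comp_hasDerivAt (0 : ℝ)
    (hasDerivAt_exp_smul_const' (𝕂 := ℝ) Ω 0)
  rwa [zero_smul, exp_zero, mul_one] at h

def crossMatrix {R : Type*} [Ring R] (a : Fin 3 → R) : Matrix (Fin 3) (Fin 3) R :=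
  !![0, -a 2, a 1; a 2, 0, -a 0; -a 1, a 0, 0]

variable {R : Type*} [CommRing R]

theorem crossMatrix_mulVec (a x : Fin 3 → R) : crossMatrix a *ᵥ x = a ⨯₃ x := by
  ext j
  fin_cases j <;> simp [crossMatrix, cross_apply, mulVec, dotProduct, Fin.sum_univ_three] <;> ring

theorem transpose_crossMatrix (a : Fin 3 → R) : (crossMatrix a)ᵀ = -crossMatrix a := by
  ext j k
  fin_cases j <;> fin_cases k <;> simp [crossMatrix]

end Matrix

theorem fderiv_apply_eq_zero_of_comp_eq_const {𝕜 E F : Type*} [NontriviallyNormedField 𝕜]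
    [NormedAddCommGroup E] [NormedSpace 𝕜 E] [NormedAddCommGroup F] [NormedSpace 𝕜 F]
    {U : E → F} {γ : 𝕜 → E} {v : E}
    (hU : DifferentiableAt 𝕜 U (γ 0)) (hγ : HasDerivAt γ v 0)
    (hconst : ∀ t, U (γ t) = U (γ 0)) :
    fderiv 𝕜 U (γ 0) v = 0 := by
  have h := hU.hasFDerivAt.comp_hasDerivAt 0 hγ
  rw [show U ∘ γ = fun _ => U (γ 0) from funext hconst] at h
  exact h.unique (hasDerivAt_const 0 _)

theorem ContinuousLinearMap.apply_eq_sum_dotProduct {R ι n : Type*} [CommSemiring R]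
    [TopologicalSpace R] [Fintype ι] [DecidableEq ι] [Fintype n] [DecidableEq n]
    (L : (ι → n → R) →L[R] R) (v : ι → n → R) :
    L v = ∑ i, v i ⬝ᵥ fun j => L (Pi.single i (Pi.single j 1)) := by
  have hv : v = ∑ i, ∑ j, v i j • Pi.single i (Pi.single j (1 : R)) := by
    ext i j
    simp [Finset.sum_apply, Pi.single_apply, ite_apply]
  conv_lhs => rw [hv]
  simp [map_sum, dotProduct]

theorem sum_cross_fderiv_dotProduct_eq_zero {ι : Type*} [Fintype ι] [DecidableEq ι]
    {U : (ι → Fin 3 → ℝ) → ℝ} {q : ι → Fin 3 → ℝ} (hU : DifferentiableAt ℝ U q)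
    (hinv : ∀ R : Matrix (Fin 3) (Fin 3) ℝ, Rᵀ * R = 1 → R.det = 1 →
      U (fun i => R.mulVec (q i)) = U q)
    (a : Fin 3 → ℝ) :
    ∑ i, (a ⨯₃ q i) ⬝ᵥ (fun j => fderiv ℝ U q (Pi.single i (Pi.single j 1))) = 0 := by
  have hskew : ∀ t : ℝ, (t • crossMatrix a)ᵀ = -(t • crossMatrix a) := fun t => by
    rw [transpose_smul, transpose_crossMatrix, smul_neg]
  have h := fderiv_apply_eq_zero_of_comp_eq_const (U := U)
    (γ := fun t i => exp (t • crossMatrix a) *ᵥ q i)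
    (by simpa using hU) (hasDerivAt_exp_smul_mulVec _ q) fun t => by
      simpa using hinv _ (transpose_exp_mul_exp_of_transpose_eq_neg (hskew t))
        (det_exp_of_transpose_eq_neg (hskew t))
  simp only [zero_smul, exp_zero, one_mulVec, crossMatrix_mulVec] at h
  rwa [ContinuousLinearMap.apply_eq_sum_dotProduct] at h

/-- If `U` is differentiable and invariant under the simultaneous action of `SO(3)` on
each argument, then `∑ i, qᵢ × (∂U/∂qᵢ) = 0`. -/
theorem stmt0 (N : ℕ) (U : (Fin N → Fin 3 → ℝ) → ℝ)
    (hU : Differentiable ℝ U)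
    (hinv : ∀ R : Matrix (Fin 3) (Fin 3) ℝ, Rᵀ * R = 1 → R.det = 1 →
      ∀ q : Fin N → Fin 3 → ℝ, U (fun i => R.mulVec (q i)) = U q)
    (q : Fin N → Fin 3 → ℝ) :
    ∑ i : Fin N, crossProduct (q i)
      (fun j => fderiv ℝ U q (Pi.single i (Pi.single j (1:ℝ)))) = 0 := by
  set w := ∑ i : Fin N, crossProduct (q i)
    (fun j => fderiv ℝ U q (Pi.single i (Pi.single j (1:ℝ))))
  have hw : w ⬝ᵥ w = 0 := by
    rw [← sum_cross_fderiv_dotProduct_eq_zero (hU q) (fun R hR hdet => hinv R hR hdet q) w,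
      dotProduct_sum]
    refine Finset.sum_congr rfl fun i _ => ?_
    rw [triple_product_permutation, triple_product_permutation, dotProduct_comm]
  exact dotProduct_self_eq_zero.mp hw
end

section
/- Suppose 0 < I_x < I_y < I_z and Ω satisfies Euler's equations with conserved quantities 2K = Σ I_αΩ_α² and |C|² = Σ I_α²Ω_α². If |C|² = 2K I_y and additionally 2K = I_y Ω_y(t₀)² at some time t₀, then Ω_x and Ω_z vanish identically and Ω is constant. -/
/-!
The transverse energy `u = Ix Ωx² + Iz Ωz² = 2K - Iy Ωy²` vanishes at `t₀`, and by Euler's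
equations `u' = 2 (Ix - Iz) Ωx Ωy Ωz`. Since `Iy Ωy² ≤ 2K`, `Ωy` is bounded, so `|u'| ≤ L u`
for a constant `L`, and Grönwall's inequality (forwards and backwards in time) forces `u ≡ 0`.
Then `Ωx = Ωz = 0`, and Euler's equation for `Ωy` gives `Ωy' = 0`.
-/

section Gronwall

variable {E : Type*} [NormedAddCommGroup E] [NormedSpace ℝ E]

theorem eq_zero_of_norm_deriv_le_mul_norm_of_eq_zero_of_le {f f' : ℝ → E} {K t₀ t : ℝ}
    (hf : ∀ t, HasDerivAt f (f' t) t) (bound : ∀ t, ‖f' t‖ ≤ K * ‖f t‖) (h₀ : f t₀ = 0)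
    (ht : t₀ ≤ t) : f t = 0 :=
  eq_zero_of_abs_deriv_le_mul_abs_self_of_eq_zero_right
    (fun s _ => (hf s).continuousAt.continuousWithinAt) (fun s _ => (hf s).hasDerivWithinAt)
    h₀ (fun s _ => bound s) t ⟨ht, le_rfl⟩

theorem eq_zero_of_norm_deriv_le_mul_norm_of_eq_zero {f f' : ℝ → E} {K t₀ : ℝ}
    (hf : ∀ t, HasDerivAt f (f' t) t) (bound : ∀ t, ‖f' t‖ ≤ K * ‖f t‖) (h₀ : f t₀ = 0)
    (t : ℝ) : f t = 0 := by
  rcases le_total t₀ t with ht | ht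
  · exact eq_zero_of_norm_deriv_le_mul_norm_of_eq_zero_of_le hf bound h₀ ht
  · have hrev := eq_zero_of_norm_deriv_le_mul_norm_of_eq_zero_of_le (t₀ := 0) (t := t₀ - t)
      (f := fun s => f (t₀ - s)) (fun s => (hf (t₀ - s)).comp_const_sub t₀ s)
      (fun s => by simpa only [norm_neg] using bound (t₀ - s)) (by simpa using h₀)
      (sub_nonneg.mpr ht)
    simpa using hrev

end Gronwall

theorem mul_sq_add_mul_sq_eq_zero_iff {a b x y : ℝ} (ha : 0 < a) (hb : 0 < b) :
    a * x ^ 2 + b * y ^ 2 = 0 ↔ x = 0 ∧ y = 0 := by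
  rw [add_eq_zero_iff_of_nonneg (by positivity) (by positivity)]
  simp [ha.ne', hb.ne']

theorem abs_transverse_energy_deriv_le {a b x y z B : ℝ} (ha : 0 < a) (hab : a ≤ b) (hy : |y| ≤ B) :
    |2 * (a - b) * x * y * z| ≤ (b - a) * B / a * (a * x ^ 2 + b * z ^ 2) := by
  have hxz : a * |2 * x * z| ≤ a * x ^ 2 + b * z ^ 2 := by
    have hamgm : |2 * x * z| ≤ x ^ 2 + z ^ 2 := by
      rw [abs_le]; constructor <;> nlinarith [sq_nonneg (x + z), sq_nonneg (x - z)]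
    nlinarith [sq_nonneg z]
  rw [div_mul_eq_mul_div, le_div_iff₀ ha]
  calc |2 * (a - b) * x * y * z| * a = (b - a) * |y| * (a * |2 * x * z|) := by
        rw [show 2 * (a - b) * x * y * z = (a - b) * y * (2 * x * z) by ring, abs_mul, abs_mul,
          abs_sub_comm, abs_of_nonneg (sub_nonneg.mpr hab)]
        ring
    _ ≤ (b - a) * B * (a * x ^ 2 + b * z ^ 2) := by
        have hB : 0 ≤ B := (abs_nonneg y).trans hy
        gcongr

theorem hasDerivAt_transverse_energy {Ωx Ωy Ωz : ℝ → ℝ} {Ix Iy Iz : ℝ}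
    (hx : Differentiable ℝ Ωx) (hz : Differentiable ℝ Ωz)
    (ex : ∀ t, Ix * deriv Ωx t = (Iy - Iz) * Ωy t * Ωz t)
    (ez : ∀ t, Iz * deriv Ωz t = (Ix - Iy) * Ωx t * Ωy t) (t : ℝ) :
    HasDerivAt (fun t => Ix * Ωx t ^ 2 + Iz * Ωz t ^ 2) (2 * (Ix - Iz) * Ωx t * Ωy t * Ωz t) t := by
  refine ((((hx t).hasDerivAt.fun_pow 2).const_mul Ix).add
    (((hz t).hasDerivAt.fun_pow 2).const_mul Iz)).congr_deriv ?_
  push_cast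
  linear_combination (2 * Ωx t) * ex t + (2 * Ωz t) * ez t

theorem stmt15_general (Ωx Ωy Ωz : ℝ → ℝ)
    (hx : Differentiable ℝ Ωx) (hy : Differentiable ℝ Ωy) (hz : Differentiable ℝ Ωz)
    (Ix Iy Iz K : ℝ)
    (h0 : 0 < Ix) (hxy : Ix < Iy) (hyz : Iy < Iz)
    (ex : ∀ t, Ix * deriv Ωx t = (Iy - Iz) * Ωy t * Ωz t)
    (ey : ∀ t, Iy * deriv Ωy t = (Iz - Ix) * Ωz t * Ωx t)
    (ez : ∀ t, Iz * deriv Ωz t = (Ix - Iy) * Ωx t * Ωy t)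
    (hK : ∀ t, 2 * K = Ix * (Ωx t)^2 + Iy * (Ωy t)^2 + Iz * (Ωz t)^2)
    (t₀ : ℝ) (ht₀ : 2 * K = Iy * (Ωy t₀)^2) :
    (∀ t, Ωx t = 0 ∧ Ωz t = 0) ∧
    (∀ t s, Ωx t = Ωx s ∧ Ωy t = Ωy s ∧ Ωz t = Ωz s) := by
  have hIy : 0 < Iy := h0.trans hxy
  have hIz : 0 < Iz := hIy.trans hyz
  have hΩy : ∀ t, |Ωy t| ≤ √(2 * K / Iy) := fun t => Real.abs_le_sqrt <| by
    rw [le_div_iff₀ hIy]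
    nlinarith [hK t, sq_nonneg (Ωx t), sq_nonneg (Ωz t)]
  have hu : ∀ t, Ix * Ωx t ^ 2 + Iz * Ωz t ^ 2 = 0 :=
    eq_zero_of_norm_deriv_le_mul_norm_of_eq_zero (hasDerivAt_transverse_energy hx hz ex ez)
      (fun t => by
        rw [Real.norm_eq_abs, Real.norm_of_nonneg (by positivity)]
        exact abs_transverse_energy_deriv_le h0 (hxy.trans hyz).le (hΩy t))
      (t₀ := t₀) (by linarith [hK t₀])
  have hxz : ∀ t, Ωx t = 0 ∧ Ωz t = 0 := fun t => (mul_sq_add_mul_sq_eq_zero_iff h0 hIz).mp (hu t)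
  have hΩy' : ∀ t, deriv Ωy t = 0 := fun t => by
    have h := ey t
    rw [(hxz t).1, mul_zero] at h
    exact (mul_eq_zero.mp h).resolve_left hIy.ne'
  refine ⟨hxz, fun t s => ⟨?_, is_const_of_deriv_eq_zero hy hΩy' t s, ?_⟩⟩ <;> simp [hxz]

theorem stmt15 (Ωx Ωy Ωz : ℝ → ℝ)
    (hx : Differentiable ℝ Ωx) (hy : Differentiable ℝ Ωy) (hz : Differentiable ℝ Ωz)
    (Ix Iy Iz K Csq : ℝ)
    (h0 : 0 < Ix) (hxy : Ix < Iy) (hyz : Iy < Iz)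
    (ex : ∀ t, Ix * deriv Ωx t = (Iy - Iz) * Ωy t * Ωz t)
    (ey : ∀ t, Iy * deriv Ωy t = (Iz - Ix) * Ωz t * Ωx t)
    (ez : ∀ t, Iz * deriv Ωz t = (Ix - Iy) * Ωx t * Ωy t)
    (hK : ∀ t, 2 * K = Ix * (Ωx t)^2 + Iy * (Ωy t)^2 + Iz * (Ωz t)^2)
    (hC : ∀ t, Csq = Ix^2 * (Ωx t)^2 + Iy^2 * (Ωy t)^2 + Iz^2 * (Ωz t)^2)
    (hcase : Csq = 2 * K * Iy)
    (t₀ : ℝ) (ht₀ : 2 * K = Iy * (Ωy t₀)^2) :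
    (∀ t, Ωx t = 0 ∧ Ωz t = 0) ∧
    (∀ t s, Ωx t = Ωx s ∧ Ωy t = Ωy s ∧ Ωz t = Ωz s) :=
  stmt15_general Ωx Ωy Ωz hx hy hz Ix Iy Iz K h0 hxy hyz ex ey ez hK t₀ ht₀
end

section
/- For 0 < k < 1 or k > 1, the five functions of τ given by cn(τ,k)·sn(τ,k), sn(τ,k)·dn(τ,k), dn(τ,k)·cn(τ,k), sn(τ,k)², and the constant function 1 are linearly independent over ℝ on any interval around 0. -/
set_option maxHeartbeats 4000000 in
/-- Linear independence of `cn·sn, sn·dn, dn·cn, sn², 1` for Jacobi elliptic functions with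
modulus `k`, `k² ≠ 1`.  The Jacobi elliptic functions are characterized as the solutions of
the ODE system `sn' = cn·dn`, `cn' = -sn·dn`, `dn' = -k²·sn·cn` with
`sn 0 = 0`, `cn 0 = 1`, `dn 0 = 1`. -/
theorem stmt18 (k : ℝ) (hk : (0 < k ∧ k < 1) ∨ 1 < k)
    (sn cn dn : ℝ → ℝ)
    (hsn : Differentiable ℝ sn) (hcn : Differentiable ℝ cn) (hdn : Differentiable ℝ dn)
    (hsn' : ∀ τ, deriv sn τ = cn τ * dn τ)
    (hcn' : ∀ τ, deriv cn τ = -(sn τ * dn τ))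
    (hdn' : ∀ τ, deriv dn τ = -(k^2 * sn τ * cn τ))
    (hsn0 : sn 0 = 0) (hcn0 : cn 0 = 1) (hdn0 : dn 0 = 1)
    (a b : ℝ) (hab : a < 0) (hb : 0 < b)
    (a₁ a₂ a₃ a₄ a₅ : ℝ)
    (hlin : ∀ τ ∈ Set.Icc a b,
      a₁ * (cn τ * sn τ) + a₂ * (sn τ * dn τ) + a₃ * (dn τ * cn τ)
        + a₄ * (sn τ)^2 + a₅ = 0) :
    a₁ = 0 ∧ a₂ = 0 ∧ a₃ = 0 ∧ a₄ = 0 ∧ a₅ = 0 := by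
  have hk2 : k^2 - 1 ≠ 0 := by rcases hk with ⟨h0,h1⟩|h1 <;> nlinarith
  have Hs : ∀ τ, HasDerivAt sn (cn τ * dn τ) τ := fun τ => hsn' τ ▸ (hsn τ).hasDerivAt
  have Hc : ∀ τ, HasDerivAt cn (-(sn τ * dn τ)) τ := fun τ => hcn' τ ▸ (hcn τ).hasDerivAt
  have Hd : ∀ τ, HasDerivAt dn (-(k^2 * sn τ * cn τ)) τ := fun τ => hdn' τ ▸ (hdn τ).hasDerivAt
  have mono : ∀ (τ : ℝ) (i j l : ℕ), HasDerivAt (fun t => sn t ^ i * cn t ^ j * dn t ^ l)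
      ((((i : ℝ) * sn τ ^ (i-1) * (cn τ * dn τ)) * cn τ ^ j + sn τ ^ i * ((j : ℝ) * cn τ ^ (j-1) * (-(sn τ * dn τ)))) * dn τ ^ l
        + sn τ ^ i * cn τ ^ j * ((l : ℝ) * dn τ ^ (l-1) * (-(k^2 * sn τ * cn τ)))) τ :=
    fun τ i j l => (((Hs τ).pow i).mul ((Hc τ).pow j)).mul ((Hd τ).pow l)
  have e0 : deriv (fun t => (a₅) * (sn t ^ 0 * cn t ^ 0 * dn t ^ 0) + (a₃) * (sn t ^ 0 * cn t ^ 1 * dn t ^ 1) + (a₂) * (sn t ^ 1 * cn t ^ 0 * dn t ^ 1) + (a₁) * (sn t ^ 1 * cn t ^ 1 * dn t ^ 0) + (a₄) * (sn t ^ 2 * cn t ^ 0 * dn t ^ 0)) = (fun t => (a₂) * (sn t ^ 0 * cn t ^ 1 * dn t ^ 2) + (a₁) * (sn t ^ 0 * cn t ^ 2 * dn t ^ 1) + (-1*a₃) * (sn t ^ 1 * cn t ^ 0 * dn t ^ 2) + (2*a₄) * (sn t ^ 1 * cn t ^ 1 * dn t ^ 1) + (-1*k^2*a₃) * (sn t ^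 1 * cn t ^ 2 * dn t ^ 0) + (-1*a₁) * (sn t ^ 2 * cn t ^ 0 * dn t ^ 1) + (-1*k^2*a₂) * (sn t ^ 2 * cn t ^ 1 * dn t ^ 0)) := by
    funext τ
    exact (((((((mono τ 0 0 0).const_mul (a₅)).add ((mono τ 0 1 1).const_mul (a₃))).add ((mono τ 1 0 1).const_mul (a₂))).add ((mono τ 1 1 0).const_mul (a₁))).add ((mono τ 2 0 0).const_mul (a₄)))).deriv.trans (by norm_num; ring)
  have e1 : deriv (fun t => (a₂) * (sn t ^ 0 * cn t ^ 1 * dn t ^ 2) + (a₁) * (sn t ^ 0 * cn t ^ 2 * dn t ^ 1) + (-1*a₃) * (sn t ^ 1 * cn t ^ 0 * dn t ^ 2) + (2*a₄) * (sn t ^ 1 * cn t ^ 1 * dn t ^ 1) + (-1*k^2*a₃) * (sn t ^ 1 * cn t ^ 2 * dn t ^ 0) + (-1*a₁) * (sn t ^ 2 * cn t ^ 0 * dn t ^ 1) + (-1*k^2*a₂) * (sn t ^ 2 * cn t ^ 1 * dn t ^ 0)) = (fun t => (-1*a₃) * (sn t ^ 0 * cn t ^ 1 * dn t ^ 3) +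 (2*a₄) * (sn t ^ 0 * cn t ^ 2 * dn t ^ 2) + (-1*k^2*a₃) * (sn t ^ 0 * cn t ^ 3 * dn t ^ 1) + (-1*a₂) * (sn t ^ 1 * cn t ^ 0 * dn t ^ 3) + (-4*a₁) * (sn t ^ 1 * cn t ^ 1 * dn t ^ 2) + (-4*k^2*a₂) * (sn t ^ 1 * cn t ^ 2 * dn t ^ 1) + (-1*k^2*a₁) * (sn t ^ 1 * cn t ^ 3 * dn t ^ 0) + (-2*a₄) * (sn t ^ 2 * cn t ^ 0 * dn t ^ 2) + (4*k^2*a₃) * (sn t ^ 2 * cn t ^ 1 * dn t ^ 1) + (-2*k^2*a₄) * (sn t ^ 2 * cn t ^ 2 * dn t ^ 0) + (k^2*a₂) * (sn t ^ 3 * cn t ^ 0 * dn t ^ 1) + (k^2*a₁) * (sn t ^ 3 * cn t ^ 1 * dn t ^ 0)) := by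
    funext τ
    exact (((((((((mono τ 0 1 2).const_mul (a₂)).add ((mono τ 0 2 1).const_mul (a₁))).add ((mono τ 1 0 2).const_mul (-1*a₃))).add ((mono τ 1 1 1).const_mul (2*a₄))).add ((mono τ 1 2 0).const_mul (-1*k^2*a₃))).add ((mono τ 2 0 1).const_mul (-1*a₁))).add ((mono τ 2 1 0).const_mul (-1*k^2*a₂)))).deriv.trans (by norm_num; ring)
  have e2 : deriv (fun t => (-1*a₃) * (sn t ^ 0 * cn t ^ 1 * dn t ^ 3) + (2*a₄) * (sn t ^ 0 * cn t ^ 2 * dn t ^ 2) + (-1*k^2*a₃) * (sn t ^ 0 * cn t ^ 3 * dn t ^ 1) + (-1*a₂) * (sn t ^ 1 * cn t ^ 0 * dn t ^ 3) + (-4*a₁) * (sn t ^ 1 * cn t ^ 1 * dn t ^ 2) + (-4*k^2*a₂) * (sn t ^ 1 * cn t ^ 2 * dn t ^ 1) + (-1*k^2*a₁) * (sn t ^ 1 * cn t ^ 3 * dn t ^ 0) + (-2*a₄) * (sn t ^ 2 * cn t ^ 0 * dn t ^ 2) + (4*k^2*a₃) * (sn t ^ 2 * cn t ^ 1 * dn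 t ^ 1) + (-2*k^2*a₄) * (sn t ^ 2 * cn t ^ 2 * dn t ^ 0) + (k^2*a₂) * (sn t ^ 3 * cn t ^ 0 * dn t ^ 1) + (k^2*a₁) * (sn t ^ 3 * cn t ^ 1 * dn t ^ 0)) = (fun t => (-1*a₂) * (sn t ^ 0 * cn t ^ 1 * dn t ^ 4) + (-4*a₁) * (sn t ^ 0 * cn t ^ 2 * dn t ^ 3) + (-4*k^2*a₂) * (sn t ^ 0 * cn t ^ 3 * dn t ^ 2) + (-1*k^2*a₁) * (sn t ^ 0 * cn t ^ 4 * dn t ^ 1) + (a₃) * (sn t ^ 1 * cn t ^ 0 * dn t ^ 4) + (-8*a₄) * (sn t ^ 1 * cn t ^ 1 * dn t ^ 3) + (14*k^2*a₃) * (sn t ^ 1 * cn t ^ 2 * dn t ^ 2) + (-8*k^2*a₄) * (sn t ^ 1 * cn t ^ 3 * dn t ^ 1) + (k^4*a₃) * (sn t ^ 1 * cn t ^ 4 * dn t ^ 0) + (4*a₁) * (sn t ^ 2 * cn t ^ 0 * dn t ^ 3) + (14*k^2*a₂) * (sn t ^ 2 * cn t ^ 1 * dn t ^ 2) + (14*k^2*a₁)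 * (sn t ^ 2 * cn t ^ 2 * dn t ^ 1) + (4*k^4*a₂) * (sn t ^ 2 * cn t ^ 3 * dn t ^ 0) + (-4*k^2*a₃) * (sn t ^ 3 * cn t ^ 0 * dn t ^ 2) + (8*k^2*a₄) * (sn t ^ 3 * cn t ^ 1 * dn t ^ 1) + (-4*k^4*a₃) * (sn t ^ 3 * cn t ^ 2 * dn t ^ 0) + (-1*k^2*a₁) * (sn t ^ 4 * cn t ^ 0 * dn t ^ 1) + (-1*k^4*a₂) * (sn t ^ 4 * cn t ^ 1 * dn t ^ 0)) := by
    funext τ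
    exact ((((((((((((((mono τ 0 1 3).const_mul (-1*a₃)).add ((mono τ 0 2 2).const_mul (2*a₄))).add ((mono τ 0 3 1).const_mul (-1*k^2*a₃))).add ((mono τ 1 0 3).const_mul (-1*a₂))).add ((mono τ 1 1 2).const_mul (-4*a₁))).add ((mono τ 1 2 1).const_mul (-4*k^2*a₂))).add ((mono τ 1 3 0).const_mul (-1*k^2*a₁))).add ((mono τ 2 0 2).const_mul (-2*a₄))).add ((mono τ 2 1 1).const_mul (4*k^2*a₃))).add ((mono τ 2 2 0).const_mul (-2*k^2*a₄))).add ((mono τ 3 0 1).const_mul (k^2*a₂))).add ((mono τ 3 1 0).const_mul (k^2*a₁)))).deriv.trans (by norm_num; ring)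
  have e3 : deriv (fun t => (-1*a₂) * (sn t ^ 0 * cn t ^ 1 * dn t ^ 4) + (-4*a₁) * (sn t ^ 0 * cn t ^ 2 * dn t ^ 3) + (-4*k^2*a₂) * (sn t ^ 0 * cn t ^ 3 * dn t ^ 2) + (-1*k^2*a₁) * (sn t ^ 0 * cn t ^ 4 * dn t ^ 1) + (a₃) * (sn t ^ 1 * cn t ^ 0 * dn t ^ 4) + (-8*a₄) * (sn t ^ 1 * cn t ^ 1 * dn t ^ 3) + (14*k^2*a₃) * (sn t ^ 1 * cn t ^ 2 * dn t ^ 2) + (-8*k^2*a₄) * (sn t ^ 1 * cn t ^ 3 * dn t ^ 1) + (k^4*a₃) * (sn t ^ 1 * cn t ^ 4 * dn t ^ 0) + (4*a₁) * (sn t ^ 2 * cn t ^ 0 * dn t ^ 3) + (14*k^2*a₂) * (sn t ^ 2 * cn t ^ 1 * dn t ^ 2) + (14*k^2*a₁) * (sn t ^ 2 * cn t ^ 2 * dn t ^ 1) + (4*k^4*a₂) * (sn t ^ 2 * cn t ^ 3 * dn t ^ 0) + (-4*k^2*a₃) * (sn t ^ 3 * cn t ^ 0 * dn t ^ 2) +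 (8*k^2*a₄) * (sn t ^ 3 * cn t ^ 1 * dn t ^ 1) + (-4*k^4*a₃) * (sn t ^ 3 * cn t ^ 2 * dn t ^ 0) + (-1*k^2*a₁) * (sn t ^ 4 * cn t ^ 0 * dn t ^ 1) + (-1*k^4*a₂) * (sn t ^ 4 * cn t ^ 1 * dn t ^ 0)) = (fun t => (a₃) * (sn t ^ 0 * cn t ^ 1 * dn t ^ 5) + (-8*a₄) * (sn t ^ 0 * cn t ^ 2 * dn t ^ 4) + (14*k^2*a₃) * (sn t ^ 0 * cn t ^ 3 * dn t ^ 3) + (-8*k^2*a₄) * (sn t ^ 0 * cn t ^ 4 * dn t ^ 2) + (k^4*a₃) * (sn t ^ 0 * cn t ^ 5 * dn t ^ 1) + (a₂) * (sn t ^ 1 * cn t ^ 0 * dn t ^ 5) + (16*a₁) * (sn t ^ 1 * cn t ^ 1 * dn t ^ 4) + (44*k^2*a₂) * (sn t ^ 1 * cn t ^ 2 * dn t ^ 3) + (44*k^2*a₁) * (sn t ^ 1 * cn t ^ 3 * dn t ^ 2) + (16*k^4*a₂) * (sn t ^ 1 * cn t ^ 4 * dn t ^ 1) + (k^4*a₁)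 * (sn t ^ 1 * cn t ^ 5 * dn t ^ 0) + (8*a₄) * (sn t ^ 2 * cn t ^ 0 * dn t ^ 4) + (-44*k^2*a₃) * (sn t ^ 2 * cn t ^ 1 * dn t ^ 3) + (72*k^2*a₄) * (sn t ^ 2 * cn t ^ 2 * dn t ^ 2) + (-44*k^4*a₃) * (sn t ^ 2 * cn t ^ 3 * dn t ^ 1) + (8*k^4*a₄) * (sn t ^ 2 * cn t ^ 4 * dn t ^ 0) + (-14*k^2*a₂) * (sn t ^ 3 * cn t ^ 0 * dn t ^ 3) + (-44*k^2*a₁) * (sn t ^ 3 * cn t ^ 1 * dn t ^ 2) + (-44*k^4*a₂) * (sn t ^ 3 * cn t ^ 2 * dn t ^ 1) + (-14*k^4*a₁) * (sn t ^ 3 * cn t ^ 3 * dn t ^ 0) + (-8*k^2*a₄) * (sn t ^ 4 * cn t ^ 0 * dn t ^ 2) + (16*k^4*a₃) * (sn t ^ 4 * cn t ^ 1 * dn t ^ 1) + (-8*k^4*a₄) * (sn t ^ 4 * cn t ^ 2 * dn t ^ 0) + (k^4*a₂) * (sn t ^ 5 * cn t ^ 0 * dn t ^ 1) + (k^4*a₁)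 * (sn t ^ 5 * cn t ^ 1 * dn t ^ 0)) := by
    funext τ
    exact ((((((((((((((((((((mono τ 0 1 4).const_mul (-1*a₂)).add ((mono τ 0 2 3).const_mul (-4*a₁))).add ((mono τ 0 3 2).const_mul (-4*k^2*a₂))).add ((mono τ 0 4 1).const_mul (-1*k^2*a₁))).add ((mono τ 1 0 4).const_mul (a₃))).add ((mono τ 1 1 3).const_mul (-8*a₄))).add ((mono τ 1 2 2).const_mul (14*k^2*a₃))).add ((mono τ 1 3 1).const_mul (-8*k^2*a₄))).add ((mono τ 1 4 0).const_mul (k^4*a₃))).add ((mono τ 2 0 3).const_mul (4*a₁))).add ((mono τ 2 1 2).const_mul (14*k^2*a₂))).add ((mono τ 2 2 1).const_mul (14*k^2*a₁))).add ((mono τ 2 3 0).const_mul (4*k^4*a₂))).add ((mono τ 3 0 2).const_mul (-4*k^2*a₃))).add ((mono τ 3 1 1).const_mul (8*k^2*a₄))).add ((mono τ 3 2 0).const_mul (-4*k^4*a₃))).add ((mono τ 4 0 1).const_mul (-1*k^2*a₁))).add ((mono τ 4 1 0).const_mul (-1*k^4*a₂)))).deriv.trans (by norm_num; ring)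
  have hd0 : deriv (fun _ : ℝ => (0:ℝ)) = fun _ : ℝ => (0:ℝ) := by funext x; simp
  have h0 : (fun t => (a₅) * (sn t ^ 0 * cn t ^ 0 * dn t ^ 0) + (a₃) * (sn t ^ 0 * cn t ^ 1 * dn t ^ 1) + (a₂) * (sn t ^ 1 * cn t ^ 0 * dn t ^ 1) + (a₁) * (sn t ^ 1 * cn t ^ 1 * dn t ^ 0) + (a₄) * (sn t ^ 2 * cn t ^ 0 * dn t ^ 0)) =ᶠ[nhds (0:ℝ)] (fun _ => (0:ℝ)) := by
    filter_upwards [Ioo_mem_nhds hab hb] with τ hτ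
    linear_combination hlin τ ⟨hτ.1.le, hτ.2.le⟩
  have h1 : (fun t => (a₂) * (sn t ^ 0 * cn t ^ 1 * dn t ^ 2) + (a₁) * (sn t ^ 0 * cn t ^ 2 * dn t ^ 1) + (-1*a₃) * (sn t ^ 1 * cn t ^ 0 * dn t ^ 2) + (2*a₄) * (sn t ^ 1 * cn t ^ 1 * dn t ^ 1) + (-1*k^2*a₃) * (sn t ^ 1 * cn t ^ 2 * dn t ^ 0) + (-1*a₁) * (sn t ^ 2 * cn t ^ 0 * dn t ^ 1) + (-1*k^2*a₂) * (sn t ^ 2 * cn t ^ 1 * dn t ^ 0)) =ᶠ[nhds (0:ℝ)] (fun _ => (0:ℝ)) := by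
    have h := h0.deriv
    rw [e0, hd0] at h
    exact h
  have h2 : (fun t => (-1*a₃) * (sn t ^ 0 * cn t ^ 1 * dn t ^ 3) + (2*a₄) * (sn t ^ 0 * cn t ^ 2 * dn t ^ 2) + (-1*k^2*a₃) * (sn t ^ 0 * cn t ^ 3 * dn t ^ 1) + (-1*a₂) * (sn t ^ 1 * cn t ^ 0 * dn t ^ 3) + (-4*a₁) * (sn t ^ 1 * cn t ^ 1 * dn t ^ 2) + (-4*k^2*a₂) * (sn t ^ 1 * cn t ^ 2 * dn t ^ 1) + (-1*k^2*a₁) * (sn t ^ 1 * cn t ^ 3 * dn t ^ 0) + (-2*a₄) * (sn t ^ 2 * cn t ^ 0 * dn t ^ 2) + (4*k^2*a₃) * (sn t ^ 2 * cn t ^ 1 * dn t ^ 1) + (-2*k^2*a₄) * (sn t ^ 2 * cn t ^ 2 * dn t ^ 0) + (k^2*a₂) * (sn t ^ 3 * cn t ^ 0 * dn t ^ 1) + (k^2*a₁) * (sn t ^ 3 * cn t ^ 1 * dn t ^ 0)) =ᶠ[nhds (0:ℝ)] (fun _ => (0:ℝ)) := by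
    have h := h1.deriv
    rw [e1, hd0] at h
    exact h
  have h3 : (fun t => (-1*a₂) * (sn t ^ 0 * cn t ^ 1 * dn t ^ 4) + (-4*a₁) * (sn t ^ 0 * cn t ^ 2 * dn t ^ 3) + (-4*k^2*a₂) * (sn t ^ 0 * cn t ^ 3 * dn t ^ 2) + (-1*k^2*a₁) * (sn t ^ 0 * cn t ^ 4 * dn t ^ 1) + (a₃) * (sn t ^ 1 * cn t ^ 0 * dn t ^ 4) + (-8*a₄) * (sn t ^ 1 * cn t ^ 1 * dn t ^ 3) + (14*k^2*a₃) * (sn t ^ 1 * cn t ^ 2 * dn t ^ 2) + (-8*k^2*a₄) * (sn t ^ 1 * cn t ^ 3 * dn t ^ 1) + (k^4*a₃) * (sn t ^ 1 * cn t ^ 4 * dn t ^ 0) + (4*a₁) * (sn t ^ 2 * cn t ^ 0 * dn t ^ 3) + (14*k^2*a₂) * (sn t ^ 2 * cn t ^ 1 * dn t ^ 2) + (14*k^2*a₁) * (sn t ^ 2 * cn t ^ 2 * dn t ^ 1) + (4*k^4*a₂) * (sn t ^ 2 * cn t ^ 3 * dn t ^ 0) + (-4*k^2*a₃) * (sn t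 ^ 3 * cn t ^ 0 * dn t ^ 2) + (8*k^2*a₄) * (sn t ^ 3 * cn t ^ 1 * dn t ^ 1) + (-4*k^4*a₃) * (sn t ^ 3 * cn t ^ 2 * dn t ^ 0) + (-1*k^2*a₁) * (sn t ^ 4 * cn t ^ 0 * dn t ^ 1) + (-1*k^4*a₂) * (sn t ^ 4 * cn t ^ 1 * dn t ^ 0)) =ᶠ[nhds (0:ℝ)] (fun _ => (0:ℝ)) := by
    have h := h2.deriv
    rw [e2, hd0] at h
    exact h
  have h4 : (fun t => (a₃) * (sn t ^ 0 * cn t ^ 1 * dn t ^ 5) + (-8*a₄) * (sn t ^ 0 * cn t ^ 2 * dn t ^ 4) + (14*k^2*a₃) * (sn t ^ 0 * cn t ^ 3 * dn t ^ 3) + (-8*k^2*a₄) * (sn t ^ 0 * cn t ^ 4 * dn t ^ 2) + (k^4*a₃) * (sn t ^ 0 * cn t ^ 5 * dn t ^ 1) + (a₂) * (sn t ^ 1 * cn t ^ 0 * dn t ^ 5) + (16*a₁) * (sn t ^ 1 * cn t ^ 1 * dn t ^ 4) + (44*k^2*a₂) * (sn t ^ 1 * cn t ^ 2 * dn t ^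 3) + (44*k^2*a₁) * (sn t ^ 1 * cn t ^ 3 * dn t ^ 2) + (16*k^4*a₂) * (sn t ^ 1 * cn t ^ 4 * dn t ^ 1) + (k^4*a₁) * (sn t ^ 1 * cn t ^ 5 * dn t ^ 0) + (8*a₄) * (sn t ^ 2 * cn t ^ 0 * dn t ^ 4) + (-44*k^2*a₃) * (sn t ^ 2 * cn t ^ 1 * dn t ^ 3) + (72*k^2*a₄) * (sn t ^ 2 * cn t ^ 2 * dn t ^ 2) + (-44*k^4*a₃) * (sn t ^ 2 * cn t ^ 3 * dn t ^ 1) + (8*k^4*a₄) * (sn t ^ 2 * cn t ^ 4 * dn t ^ 0) + (-14*k^2*a₂) * (sn t ^ 3 * cn t ^ 0 * dn t ^ 3) + (-44*k^2*a₁) * (sn t ^ 3 * cn t ^ 1 * dn t ^ 2) + (-44*k^4*a₂) * (sn t ^ 3 * cn t ^ 2 * dn t ^ 1) + (-14*k^4*a₁) * (sn t ^ 3 * cn t ^ 3 * dn t ^ 0) + (-8*k^2*a₄) * (sn t ^ 4 * cn t ^ 0 * dn t ^ 2) + (16*k^4*a₃) * (sn t ^ 4 * cn t ^ 1 * dn t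 ^ 1) + (-8*k^4*a₄) * (sn t ^ 4 * cn t ^ 2 * dn t ^ 0) + (k^4*a₂) * (sn t ^ 5 * cn t ^ 0 * dn t ^ 1) + (k^4*a₁) * (sn t ^ 5 * cn t ^ 1 * dn t ^ 0)) =ᶠ[nhds (0:ℝ)] (fun _ => (0:ℝ)) := by
    have h := h3.deriv
    rw [e3, hd0] at h
    exact h
  have v0 := h0.eq_of_nhds
  simp only [hsn0, hcn0, hdn0] at v0
  norm_num at v0
  have v1 := h1.eq_of_nhds
  simp only [hsn0, hcn0, hdn0] at v1
  norm_num at v1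
  have v2 := h2.eq_of_nhds
  simp only [hsn0, hcn0, hdn0] at v2
  norm_num at v2
  have v3 := h3.eq_of_nhds
  simp only [hsn0, hcn0, hdn0] at v3
  norm_num at v3
  have v4 := h4.eq_of_nhds
  simp only [hsn0, hcn0, hdn0] at v4
  norm_num at v4
  have ha1 : a₁ = 0 := by
    have h : (3*(k^2-1)) * a₁ = 0 := by linear_combination v3 + (1+4*k^2) * v1
    exact (mul_eq_zero.mp h).resolve_left (mul_ne_zero (by norm_num) hk2)
  have ha3 : a₃ = 0 := by
    have h : ((-3)*(k^2-1)^2) * a₃ = 0 := by linear_combination v4 + 4*(1+k^2) * v2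
    exact (mul_eq_zero.mp h).resolve_left (mul_ne_zero (by norm_num) (pow_ne_zero 2 hk2))
  rw [ha3] at v2 v0
  exact ⟨ha1, by linarith, ha3, by linarith, by linarith⟩
end
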